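/- arXiv:2306.13403 — 4 statements merged into one kernel-verified Lean document; each statement's English description precedes it below -/
import Mathlib

section
/- Let G be an abelian group and let A be a finite non-empty subset of G. Then |A|^3 / E[A] ≤ σ_ent[A] ≤ σ[A], where σ[A] = |A+A|/|A| is the doubling constant, E[A] = #{(a1,a2,a3,a4) ∈ A^4 : a1 + a2 = a3 + a4} is the additive energy, and σ_ent[A] is the entropic doubling constant of the uniform distribution on A. -/
/-!
The law `q` of `X₁ + X₂` for independent `X₁, X₂` uniform on `A` gives `x` the mass
`r(x) / |A|²`, where `r(x)` counts the pairs in `A × A` summing to `x`; so `q` is supported on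
`A + A` and `∑ q(x)² = E[A] / |A|⁴`. Jensen's inequality for the concave `log`, weighted by `q`,
bounds `H(q)` above by `log |supp q|` and below by the collision entropy `-log ∑ q(x)²`.
Since `H(U_A) = log |A|`, we have `σ_ent[A] = exp H(q) / |A|`, and the two bounds become the two
inequalities of the theorem.
-/

open Finset
open scoped Pointwise

noncomputable section

/-- `IsPMF p`: the finitely supported function `p` is a probability mass function,
modelling the distribution of a random variable taking values in a finite subset. -/
def IsPMF {G : Type*} (p : G →₀ ℝ) : Prop :=
  (∀ x, 0 ≤ p x) ∧ ∑ x ∈ p.support, p x = 1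

/-- Shannon entropy `H(X)` of a random variable with distribution `p`. -/
def ent {G : Type*} (p : G →₀ ℝ) : ℝ :=
  ∑ x ∈ p.support, Real.negMulLog (p x)

/-- The joint distribution of a pair of independent random variables with
distributions `p` and `q`. -/
def prodPMF {G H : Type*} (p : G →₀ ℝ) (q : H →₀ ℝ) : (G × H) →₀ ℝ :=
  Finsupp.onFinset (p.support ×ˢ q.support) (fun z => p z.1 * q z.2)
    (fun _z hz => Finset.mem_product.2
      ⟨Finsupp.mem_support_iff.2 (left_ne_zero_of_mul hz),
       Finsupp.mem_support_iff.2 (right_ne_zero_of_mul hz)⟩)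

/-- The distribution of `X - Y`, where `X, Y` are independent with distributions `p, q`. -/
def subDist {G : Type*} [AddCommGroup G] (p q : G →₀ ℝ) : G →₀ ℝ :=
  Finsupp.mapDomain (fun z : G × G => z.1 - z.2) (prodPMF p q)

/-- The distribution of `X + Y`, where `X, Y` are independent with distributions `p, q`. -/
def sumDist {G : Type*} [AddCommGroup G] (p q : G →₀ ℝ) : G →₀ ℝ :=
  Finsupp.mapDomain (fun z : G × G => z.1 + z.2) (prodPMF p q)

/-- The entropic Ruzsa distance `d_ent(X, Y) = H(X' - Y') - H(X)/2 - H(Y)/2`,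
where `X', Y'` are independent copies of `X ~ p`, `Y ~ q`. -/
def dEnt {G : Type*} [AddCommGroup G] (p q : G →₀ ℝ) : ℝ :=
  ent (subDist p q) - ent p / 2 - ent q / 2

/-- The entropic doubling constant `σ_ent[X] = exp(H(X₁ + X₂) - H(X))`
for independent copies `X₁, X₂` of `X ~ p`. -/
def sigmaEnt {G : Type*} [AddCommGroup G] (p : G →₀ ℝ) : ℝ :=
  Real.exp (ent (sumDist p p) - ent p)

/-- First marginal of a joint distribution on `G × H`. -/
def fstMarg {G H : Type*} (w : (G × H) →₀ ℝ) : G →₀ ℝ :=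
  Finsupp.mapDomain Prod.fst w

/-- Second marginal of a joint distribution on `G × H`. -/
def sndMarg {G H : Type*} (w : (G × H) →₀ ℝ) : H →₀ ℝ :=
  Finsupp.mapDomain Prod.snd w

/-- The maximal entropic Ruzsa distance `d*_ent(X, Y)`: the supremum of
`H(X' - Y') - H(X)/2 - H(Y)/2` over all couplings `(X', Y')` of `X ~ p` and `Y ~ q`. -/
def dEntStar {G : Type*} [AddCommGroup G] (p q : G →₀ ℝ) : ℝ :=
  sSup { d : ℝ | ∃ w : (G × G) →₀ ℝ, IsPMF w ∧ fstMarg w = p ∧ sndMarg w = q ∧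
    d = ent (Finsupp.mapDomain (fun z : G × G => z.1 - z.2) w) - ent p / 2 - ent q / 2 }

/-- The uniform distribution on a finite set `A`. -/
def unif {G : Type*} [DecidableEq G] (A : Finset G) : G →₀ ℝ :=
  Finsupp.onFinset A (fun x => if x ∈ A then ((A.card : ℝ))⁻¹ else 0)
    (fun x hx => by by_contra h; exact hx (if_neg h))

/-- The distribution of `X` conditioned on the event `π(X) = y`, where `X ~ p`. -/
def condFiber {G H : Type*} [DecidableEq H] (π : G → H) (y : H) (p : G →₀ ℝ) : G →₀ ℝ :=
  Finsupp.onFinset p.support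
    (fun x => if π x = y then p x / (Finsupp.mapDomain π p) y else 0)
    (fun x hx => Finsupp.mem_support_iff.2 (fun h0 => hx (by (try simp only []); split_ifs <;> simp [h0])))

/-- The entropy `h(p)` of the Bernoulli distribution with parameter `p`. -/
def binEnt (p : ℝ) : ℝ := Real.negMulLog p + Real.negMulLog (1 - p)

/-- Skew-dimension bound: `skewDimLE A r` means the skew-dimension of `A ⊆ ℤ^D`
is at most `r`. -/
def skewDimLE {D : ℕ} : Finset (Fin D → ℤ) → ℕ → Prop
  | A, 0 => A.card ≤ 1
  | A, r + 1 => A.card ≤ 1 ∨ ∃ i : Fin D, ∀ n : ℤ,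
      skewDimLE (A.filter fun v => v i = n) r

/-- The (affine) dimension of a finite subset `A ⊆ ℤ^D`: the dimension of the
real span of `A - A`. -/
def dimAff {D : ℕ} (A : Finset (Fin D → ℤ)) : ℕ :=
  Module.finrank ℝ (Submodule.span ℝ
    { x : Fin D → ℝ | ∃ a ∈ A, ∃ b ∈ A, x = fun i => ((a i : ℝ) - (b i : ℝ)) })


open Real
open scoped Combinatorics.Additive

theorem sum_mul_log_le_log_sum_mul {ι : Type*} {s : Finset ι} {w z : ι → ℝ}
    (hw : ∀ i ∈ s, 0 ≤ w i) (hw1 : ∑ i ∈ s, w i = 1) (hz : ∀ i ∈ s, 0 < z i) :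
    ∑ i ∈ s, w i * log (z i) ≤ log (∑ i ∈ s, w i * z i) := by
  simpa only [smul_eq_mul] using strictConcaveOn_log_Ioi.concaveOn.le_map_sum hw hw1 hz

namespace IsPMF

variable {G : Type*} {p : G →₀ ℝ}

theorem pos_of_mem_support (hp : IsPMF p) {x : G} (hx : x ∈ p.support) : 0 < p x :=
  (hp.1 x).lt_of_ne' (Finsupp.mem_support_iff.1 hx)

theorem ent_le_log_card_support (hp : IsPMF p) : ent p ≤ log #p.support := by
  have hjensen := sum_mul_log_le_log_sum_mul (fun x _ => hp.1 x) hp.2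
    (fun x hx => inv_pos.2 (hp.pos_of_mem_support hx))
  have hcard : ∑ x ∈ p.support, p x * (p x)⁻¹ = #p.support := by
    rw [sum_congr rfl fun x hx => mul_inv_cancel₀ (Finsupp.mem_support_iff.1 hx)]
    simp
  calc ent p = ∑ x ∈ p.support, p x * log (p x)⁻¹ :=
        sum_congr rfl fun x _ => by rw [log_inv, negMulLog]; ring
    _ ≤ log #p.support := hcard ▸ hjensen

theorem neg_log_sum_sq_le_ent (hp : IsPMF p) : -log (∑ x ∈ p.support, p x ^ 2) ≤ ent p := by
  have hjensen := sum_mul_log_le_log_sum_mul (fun x _ => hp.1 x) hp.2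
    (fun x hx => hp.pos_of_mem_support hx)
  have hent : ent p = -∑ x ∈ p.support, p x * log (p x) := by
    simp only [ent, negMulLog, neg_mul, sum_neg_distrib]
  simp only [sq, hent]
  linarith

end IsPMF

section Uniform

variable {G : Type*} [DecidableEq G] (A : Finset G)

theorem unif_apply_of_mem {x : G} (hx : x ∈ A) : unif A x = (#A : ℝ)⁻¹ := if_pos hx

theorem support_unif : (unif A).support = A := by
  ext x
  by_cases hx : x ∈ A
  · simp [unif, hx, card_ne_zero_of_mem hx]
  · simp [unif, hx]

theorem ent_unif : ent (unif A) = log #A := by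
  rw [ent, support_unif, sum_congr rfl fun x hx => by rw [unif_apply_of_mem A hx], sum_const,
    nsmul_eq_mul, negMulLog, log_inv]
  rcases eq_or_ne (#A : ℝ) 0 with h | h
  · simp [h]
  · field_simp

end Uniform

theorem card_filter_add_eq_add_eq_addEnergy {G : Type*} [Add G] [DecidableEq G] (A : Finset G) :
    #{x ∈ A ×ˢ A ×ˢ A ×ˢ A | x.1 + x.2.1 = x.2.2.1 + x.2.2.2} = E[A] := by
  rw [addEnergy_eq_card_filter]
  exact card_equiv (Equiv.prodAssoc G G (G × G)).symm (by simp [and_assoc])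

section SumOfUniforms

variable {G : Type*} [AddCommGroup G] [DecidableEq G]

theorem sumDist_apply (p q : G →₀ ℝ) (x : G) :
    sumDist p q x = ∑ z ∈ p.support ×ˢ q.support with z.1 + z.2 = x, p z.1 * q z.2 := by
  rw [sumDist, Finsupp.mapDomain, prodPMF, Finsupp.onFinset_sum _ fun _ => Finsupp.single_zero _,
    Finsupp.finsetSum_apply, sum_filter]
  simp only [Finsupp.single_apply]

variable (A : Finset G)

theorem sumDist_unif_apply (x : G) :
    sumDist (unif A) (unif A) x = #{z ∈ A ×ˢ A | z.1 + z.2 = x} / (#A : ℝ) ^ 2 := by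
  have hmass : ∀ z ∈ A ×ˢ A, unif A z.1 * unif A z.2 = ((#A : ℝ) ^ 2)⁻¹ := fun z hz => by
    rw [mem_product] at hz
    rw [unif_apply_of_mem A hz.1, unif_apply_of_mem A hz.2, sq, mul_inv]
  rw [sumDist_apply, support_unif, sum_congr rfl fun z hz => hmass z (mem_filter.1 hz).1,
    sum_const, nsmul_eq_mul, div_eq_mul_inv]

theorem support_sumDist_unif : (sumDist (unif A) (unif A)).support = A + A := by
  ext x
  rw [Finsupp.mem_support_iff, sumDist_unif_apply, ← image_add_product, mem_image]
  constructor
  · intro hx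
    exact filter_nonempty_iff.1 (card_ne_zero.1 (by exact_mod_cast left_ne_zero_of_mul hx))
  · rintro ⟨z, hz, rfl⟩
    have hn : (#A : ℝ) ≠ 0 := by exact_mod_cast card_ne_zero_of_mem (mem_product.1 hz).1
    have hr : #{w ∈ A ×ˢ A | w.1 + w.2 = z.1 + z.2} ≠ 0 :=
      card_ne_zero_of_mem (mem_filter.2 ⟨hz, rfl⟩)
    positivity

theorem sum_sq_sumDist_unif :
    ∑ x ∈ (sumDist (unif A) (unif A)).support, sumDist (unif A) (unif A) x ^ 2
      = E[A] / (#A : ℝ) ^ 4 := by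
  simp_rw [support_sumDist_unif, sumDist_unif_apply, div_pow, ← sum_div, addEnergy_eq_sum_sq']
  push_cast
  ring

variable {A}

theorem isPMF_sumDist_unif (hA : A.Nonempty) : IsPMF (sumDist (unif A) (unif A)) := by
  refine ⟨fun x => by rw [sumDist_unif_apply]; positivity, ?_⟩
  have hn : (#A : ℝ) ≠ 0 := by exact_mod_cast hA.card_pos.ne'
  simp_rw [support_sumDist_unif, sumDist_unif_apply, ← sum_div]
  rw [← image_add_product, ← Nat.cast_sum, ← card_eq_sum_card_image, card_product]
  push_cast
  field_simp

theorem sigmaEnt_unif (hA : A.Nonempty) :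
    sigmaEnt (unif A) = exp (ent (sumDist (unif A) (unif A))) / #A := by
  rw [sigmaEnt, ent_unif, exp_sub, exp_log (by exact_mod_cast hA.card_pos)]

end SumOfUniforms

/-- For a finite non-empty subset `A` of an abelian group `G`,
`|A|^3 / E[A] ≤ σ_ent[A] ≤ |A+A| / |A|`, where `E[A]` is the additive energy. -/
theorem statement0 {G : Type*} [AddCommGroup G] [DecidableEq G]
    (A : Finset G) (hA : A.Nonempty) :
    (A.card : ℝ) ^ 3 /
        (((A ×ˢ A ×ˢ A ×ˢ A).filter
          (fun x : G × G × G × G => x.1 + x.2.1 = x.2.2.1 + x.2.2.2)).card : ℝ)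
      ≤ sigmaEnt (unif A) ∧
    sigmaEnt (unif A) ≤ ((A + A).card : ℝ) / (A.card : ℝ) := by
  have hn : (0 : ℝ) < #A := by exact_mod_cast hA.card_pos
  have hE : (0 : ℝ) < E[A] := by exact_mod_cast addEnergy_self_pos hA
  have hq := isPMF_sumDist_unif hA
  rw [card_filter_add_eq_add_eq_addEnergy, sigmaEnt_unif hA]
  constructor
  · have hcollision := hq.neg_log_sum_sq_le_ent
    rw [sum_sq_sumDist_unif, ← log_inv, inv_div] at hcollision
    calc (#A : ℝ) ^ 3 / E[A] = #A ^ 4 / E[A] / #A := by field_simp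
      _ ≤ exp (ent (sumDist (unif A) (unif A))) / #A := by
        gcongr
        exact (log_le_iff_le_exp (by positivity)).1 hcollision
  · have hsupport := hq.ent_le_log_card_support
    rw [support_sumDist_unif] at hsupport
    gcongr
    exact (exp_le_exp.2 hsupport).trans_eq (exp_log (by exact_mod_cast (hA.add hA).card_pos))

end
end

section
/- Let G be an abelian group and let X, Y, Z be random variables taking values in finite subsets of G. Then d*_ent(X, Z) ≤ d_ent(X, Y) + d_ent(Y, Z). -/
open Finset

noncomputable section

/-!
Fix any coupling `(X, Z)` of `p` and `r` and let `Y ~ q` be independent of it. Submodularity of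
entropy, `H(A, B, C) + H(C) ≤ H(A, C) + H(B, C)`, applied to `A = X - Y`, `B = (X, Z)`,
`C = X - Z` reads `H(X, Z) + H(Y) + H(X - Z) ≤ H(X - Y, Y - Z) + H(X, Z)`, because `(A, B, C)`
determines `(X, Y, Z)` and `(A, C)` determines `(X - Y, Y - Z)`. Subadditivity then gives
`H(X - Z) + H(Y) ≤ H(X - Y) + H(Y - Z)`, where `X - Y` and `Y - Z` are differences of
independent variables. Both entropy inequalities are instances of Gibbs' inequality.
-/

open Finsupp Real

namespace Finsupp

variable {α β M : Type*}

theorem mapDomain_apply_eq_sum_ite [AddCommMonoid M] [DecidableEq β] (f : α → β) (p : α →₀ M)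
    {s : Finset α} (hs : p.support ⊆ s) (y : β) :
    p.mapDomain f y = ∑ x ∈ s, if f x = y then p x else 0 := by
  rw [mapDomain, sum_apply, Finsupp.sum]
  simp_rw [single_apply]
  exact Finset.sum_subset hs fun x _ hx => by simp [notMem_support_iff.mp hx]

variable {p : α →₀ ℝ}

theorem le_mapDomain_apply (hp : 0 ≤ p) (f : α → β) (x : α) :
    p x ≤ p.mapDomain f (f x) := by
  classical
  by_cases hx : x ∈ p.support
  · rw [mapDomain_apply_eq_sum]
    exact Finset.single_le_sum (fun i _ => hp i) (Finset.mem_filter.2 ⟨hx, rfl⟩)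
  · rw [notMem_support_iff.mp hx]
    exact mapDomain_nonneg (f := f) hp (f x)

theorem mapDomain_apply_pos (hp : 0 ≤ p) (f : α → β) {x : α} (hx : x ∈ p.support) :
    0 < p.mapDomain f (f x) :=
  ((hp x).lt_of_ne' (mem_support_iff.mp hx)).trans_le (le_mapDomain_apply hp f x)

theorem sum_le_mapDomain_snd_apply {m : (α × β) →₀ ℝ} (hm : 0 ≤ m) (s : Finset α)
    (b : β) : ∑ a ∈ s, m (a, b) ≤ m.mapDomain Prod.snd b := by
  classical
  rw [mapDomain_apply_eq_sum_ite _ _ (Finset.subset_union_right (s₁ := s ×ˢ {b}))]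
  calc ∑ a ∈ s, m (a, b) = ∑ x ∈ s ×ˢ {b}, if x.2 = b then m x else 0 := by simp
    _ ≤ _ := Finset.sum_le_sum_of_subset_of_nonneg Finset.subset_union_left fun x _ _ => by
        split_ifs <;> [exact hm x; exact le_rfl]

end Finsupp

section Entropy

variable {α β γ δ : Type*}

theorem IsPMF.pos_of_mem_support_s1 {p : α →₀ ℝ} (hp : IsPMF p) {x : α} (hx : x ∈ p.support) :
    0 < p x :=
  (hp.1 x).lt_of_ne' (mem_support_iff.mp hx)

theorem IsPMF.mapDomain {p : α →₀ ℝ} (hp : IsPMF p) (f : α → β) : IsPMF (p.mapDomain f) := by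
  refine ⟨mapDomain_nonneg hp.1, ?_⟩
  have h := sum_mapDomain_index (f := f) (s := p) (h := fun _ v => v) (fun _ => rfl)
    (fun _ _ _ => rfl)
  rwa [Finsupp.sum, Finsupp.sum, hp.2] at h

theorem prodPMF_apply (p : α →₀ ℝ) (q : β →₀ ℝ) (z : α × β) :
    prodPMF p q z = p z.1 * q z.2 := rfl

theorem support_prodPMF (p : α →₀ ℝ) (q : β →₀ ℝ) :
    (prodPMF p q).support = p.support ×ˢ q.support := by
  ext ⟨a, b⟩
  simp [prodPMF]

theorem IsPMF.prodPMF {p : α →₀ ℝ} {q : β →₀ ℝ} (hp : IsPMF p) (hq : IsPMF q) :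
    IsPMF (prodPMF p q) := by
  refine ⟨fun z => mul_nonneg (hp.1 _) (hq.1 _), ?_⟩
  rw [support_prodPMF, Finset.sum_product]
  simp only [prodPMF_apply, ← Finset.mul_sum, hq.2, mul_one, hp.2]

theorem mapDomain_prodMap_prodPMF (f : α → γ) (g : β → δ) (p : α →₀ ℝ) (q : β →₀ ℝ) :
    (prodPMF p q).mapDomain (Prod.map f g) = prodPMF (p.mapDomain f) (q.mapDomain g) := by
  classical
  ext ⟨c, d⟩
  rw [mapDomain_apply_eq_sum_ite _ _ (support_prodPMF p q).le, prodPMF_apply,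
    mapDomain_apply_eq_sum_ite f p subset_rfl, mapDomain_apply_eq_sum_ite g q subset_rfl,
    Finset.sum_mul_sum, Finset.sum_product]
  refine Finset.sum_congr rfl fun a _ => Finset.sum_congr rfl fun b _ => ?_
  simp only [Prod.map, Prod.mk.injEq, prodPMF_apply]
  split_ifs <;> simp_all

theorem mapDomain_swap_prodPMF (p : α →₀ ℝ) (q : β →₀ ℝ) :
    (prodPMF p q).mapDomain Prod.swap = prodPMF q p := by
  ext ⟨b, a⟩
  rw [← Prod.swap_prod_mk, mapDomain_apply Prod.swap_injective, prodPMF_apply, prodPMF_apply,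
    mul_comm]
  rfl

theorem mapDomain_fst_prodPMF (p : α →₀ ℝ) {q : β →₀ ℝ} (hq : IsPMF q) :
    (prodPMF p q).mapDomain Prod.fst = p := by
  classical
  ext a
  rw [mapDomain_apply_eq_sum_ite _ _ (support_prodPMF p q).le, Finset.sum_product]
  have inner (x : α) : (∑ y ∈ q.support, if x = a then p x * q y else 0) =
      if x = a then p x else 0 := by
    split_ifs <;> simp [← Finset.mul_sum, hq.2]
  simp only [prodPMF_apply, inner, Finset.sum_ite_eq']
  split_ifs with ha
  · rfl
  · exact (notMem_support_iff.mp ha).symm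

theorem mapDomain_snd_prodPMF {p : α →₀ ℝ} (hp : IsPMF p) (q : β →₀ ℝ) :
    (prodPMF p q).mapDomain Prod.snd = q := by
  rw [show (Prod.snd : α × β → β) = Prod.fst ∘ Prod.swap from rfl, mapDomain_comp,
    mapDomain_swap_prodPMF, mapDomain_fst_prodPMF q hp]

theorem ent_eq_neg_sum_mul_log (p : α →₀ ℝ) : ent p = -∑ x ∈ p.support, p x * log (p x) := by
  simp [ent, negMulLog]

theorem ent_mapDomain_of_injective {f : α → β} (hf : Function.Injective f) (p : α →₀ ℝ) :
    ent (p.mapDomain f) = ent p := by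
  classical
  rw [ent, ent, mapDomain_support_of_injective hf, Finset.sum_image fun a _ b _ h => hf h]
  simp only [mapDomain_apply hf]

theorem ent_mapDomain_comp_of_injective {g : β → γ} (hg : Function.Injective g) (f : α → β)
    (p : α →₀ ℝ) : ent (p.mapDomain (g ∘ f)) = ent (p.mapDomain f) := by
  rw [mapDomain_comp, ent_mapDomain_of_injective hg]

theorem ent_prodPMF {p : α →₀ ℝ} {q : β →₀ ℝ} (hp : IsPMF p) (hq : IsPMF q) :
    ent (prodPMF p q) = ent p + ent q := by
  rw [ent, support_prodPMF, Finset.sum_product]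
  simp only [prodPMF_apply, negMulLog_mul, Finset.sum_add_distrib, ← Finset.sum_mul,
    ← Finset.mul_sum, hq.2, one_mul, hp.2, ent]

theorem ent_mapDomain_eq_neg_sum {p : α →₀ ℝ} (hp : 0 ≤ p) (f : α → β) :
    ent (p.mapDomain f) = -∑ x ∈ p.support, p x * log (p.mapDomain f (f x)) := by
  classical
  set m := p.mapDomain f
  have hmaps : ∀ x ∈ p.support, f x ∈ m.support := fun x hx =>
    mem_support_iff.2 (mapDomain_apply_pos hp f hx).ne'
  have fiber : ∀ y ∈ m.support, negMulLog (m y) =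
      -∑ x ∈ p.support with f x = y, p x * log (m (f x)) := by
    intro y _
    have hmy : m y = ∑ x ∈ p.support with f x = y, p x := by
      rw [mapDomain_apply_eq_sum_ite f p subset_rfl, Finset.sum_filter]
    rw [Finset.sum_congr rfl fun x hx => by rw [(Finset.mem_filter.1 hx).2], ← Finset.sum_mul,
      ← hmy, negMulLog, neg_mul]
  rw [ent, Finset.sum_congr rfl fiber, Finset.sum_neg_distrib,
    Finset.sum_fiberwise_of_maps_to hmaps]

theorem ent_le_neg_sum_mul_log {p : α →₀ ℝ} (hp : IsPMF p) {Q : α → ℝ}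
    (hQ : ∀ x ∈ p.support, 0 < Q x) (hQ1 : ∑ x ∈ p.support, Q x ≤ 1) :
    ent p ≤ -∑ x ∈ p.support, p x * log (Q x) := by
  have pointwise : ∀ x ∈ p.support, p x * log (Q x) - p x * log (p x) ≤ Q x - p x := by
    intro x hx
    have hpx := hp.pos_of_mem_support_s1 hx
    calc p x * log (Q x) - p x * log (p x) = p x * log (Q x / p x) := by
          rw [log_div (hQ x hx).ne' hpx.ne']; ring
      _ ≤ p x * (Q x / p x - 1) :=
          mul_le_mul_of_nonneg_left (log_le_sub_one_of_pos (div_pos (hQ x hx) hpx)) hpx.le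
      _ = Q x - p x := by field_simp
  have := Finset.sum_le_sum pointwise
  rw [Finset.sum_sub_distrib, Finset.sum_sub_distrib, hp.2] at this
  rw [ent_eq_neg_sum_mul_log]
  linarith

theorem ent_le_ent_fst_add_ent_snd {w : (α × β) →₀ ℝ} (hw : IsPMF w) :
    ent w ≤ ent (w.mapDomain Prod.fst) + ent (w.mapDomain Prod.snd) := by
  set m₁ := w.mapDomain Prod.fst
  set m₂ := w.mapDomain Prod.snd
  have hpos₁ : ∀ x ∈ w.support, 0 < m₁ x.1 := fun x hx => mapDomain_apply_pos hw.1 _ hx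
  have hpos₂ : ∀ x ∈ w.support, 0 < m₂ x.2 := fun x hx => mapDomain_apply_pos hw.1 _ hx
  have hsum : ∑ x ∈ w.support, m₁ x.1 * m₂ x.2 ≤ 1 :=
    calc ∑ x ∈ w.support, m₁ x.1 * m₂ x.2 ≤ ∑ x ∈ m₁.support ×ˢ m₂.support, m₁ x.1 * m₂ x.2 :=
          Finset.sum_le_sum_of_subset_of_nonneg
            (fun x hx => Finset.mem_product.2 ⟨mem_support_iff.2 (hpos₁ x hx).ne',
              mem_support_iff.2 (hpos₂ x hx).ne'⟩)
            fun x _ _ => mul_nonneg (mapDomain_nonneg hw.1 _) (mapDomain_nonneg hw.1 _)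
      _ = 1 := by
          rw [Finset.sum_product, ← Finset.sum_mul_sum, (hw.mapDomain _).2, (hw.mapDomain _).2,
            one_mul]
  calc ent w ≤ -∑ x ∈ w.support, w x * log (m₁ x.1 * m₂ x.2) :=
        ent_le_neg_sum_mul_log hw (fun x hx => mul_pos (hpos₁ x hx) (hpos₂ x hx)) hsum
    _ = ent m₁ + ent m₂ := by
        rw [ent_mapDomain_eq_neg_sum hw.1, ent_mapDomain_eq_neg_sum hw.1, ← neg_add,
          ← Finset.sum_add_distrib]
        refine congrArg _ (Finset.sum_congr rfl fun x hx => ?_)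
        rw [log_mul (hpos₁ x hx).ne' (hpos₂ x hx).ne', mul_add]

theorem ent_submodular {w : (α × β × γ) →₀ ℝ} (hw : IsPMF w) :
    ent w + ent (w.mapDomain fun x => x.2.2) ≤
      ent (w.mapDomain fun x => (x.1, x.2.2)) + ent (w.mapDomain Prod.snd) := by
  classical
  set m₃ := w.mapDomain fun x => x.2.2
  set m₁₃ := w.mapDomain fun x => (x.1, x.2.2)
  set m₂₃ := w.mapDomain Prod.snd
  have hm₁₃ : m₃ = m₁₃.mapDomain Prod.snd := by rw [← mapDomain_comp]; rfl
  have hm₂₃ : m₃ = m₂₃.mapDomain Prod.snd := by rw [← mapDomain_comp]; rfl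
  have hpos₃ : ∀ x ∈ w.support, 0 < m₃ x.2.2 := fun x hx => mapDomain_apply_pos hw.1 _ hx
  have hpos₁₃ : ∀ x ∈ w.support, 0 < m₁₃ (x.1, x.2.2) := fun x hx =>
    mapDomain_apply_pos hw.1 (fun x => (x.1, x.2.2)) hx
  have hpos₂₃ : ∀ x ∈ w.support, 0 < m₂₃ x.2 := fun x hx => mapDomain_apply_pos hw.1 _ hx
  set Q : α × β × γ → ℝ := fun x => m₁₃ (x.1, x.2.2) * m₂₃ x.2 / m₃ x.2.2
  set s₁ := w.support.image fun x => x.1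
  set s₂ := w.support.image fun x => x.2.1
  have hsum : ∑ x ∈ w.support, Q x ≤ 1 :=
    calc ∑ x ∈ w.support, Q x ≤ ∑ x ∈ s₁ ×ˢ s₂ ×ˢ m₃.support, Q x :=
          Finset.sum_le_sum_of_subset_of_nonneg
            (fun x hx => Finset.mem_product.2 ⟨Finset.mem_image_of_mem _ hx,
              Finset.mem_product.2 ⟨Finset.mem_image_of_mem _ hx,
                mem_support_iff.2 (hpos₃ x hx).ne'⟩⟩)
            fun x _ _ => div_nonneg (mul_nonneg (mapDomain_nonneg hw.1 _)
              (mapDomain_nonneg hw.1 _)) (mapDomain_nonneg hw.1 _)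
      _ = ∑ c ∈ m₃.support, (∑ a ∈ s₁, m₁₃ (a, c)) * (∑ b ∈ s₂, m₂₃ (b, c)) / m₃ c := by
          simp only [Q, Finset.sum_product, Finset.sum_mul_sum, Finset.sum_div]
          exact (Finset.sum_congr rfl fun a _ => Finset.sum_comm).trans Finset.sum_comm
      _ ≤ ∑ c ∈ m₃.support, m₃ c := by
          refine Finset.sum_le_sum fun c _ => div_le_of_le_mul₀ (mapDomain_nonneg hw.1 _)
            (mapDomain_nonneg hw.1 _) (mul_le_mul ?_ ?_ ?_ ?_)
          · rw [hm₁₃]; exact sum_le_mapDomain_snd_apply (mapDomain_nonneg hw.1) s₁ c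
          · rw [hm₂₃]; exact sum_le_mapDomain_snd_apply (mapDomain_nonneg hw.1) s₂ c
          · exact Finset.sum_nonneg fun b _ => mapDomain_nonneg hw.1 _
          · exact mapDomain_nonneg hw.1 _
      _ = 1 := (hw.mapDomain _).2
  have hlog : ∑ x ∈ w.support, w x * log (Q x) =
      ∑ x ∈ w.support, w x * log (m₁₃ (x.1, x.2.2)) + ∑ x ∈ w.support, w x * log (m₂₃ x.2) -
        ∑ x ∈ w.support, w x * log (m₃ x.2.2) := by
    rw [← Finset.sum_add_distrib, ← Finset.sum_sub_distrib]
    refine Finset.sum_congr rfl fun x hx => ?_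
    rw [log_div (mul_pos (hpos₁₃ x hx) (hpos₂₃ x hx)).ne' (hpos₃ x hx).ne',
      log_mul (hpos₁₃ x hx).ne' (hpos₂₃ x hx).ne']
    ring
  have gibbs := ent_le_neg_sum_mul_log hw (fun x hx =>
    div_pos (mul_pos (hpos₁₃ x hx) (hpos₂₃ x hx)) (hpos₃ x hx)) hsum
  rw [hlog] at gibbs
  rw [ent_mapDomain_eq_neg_sum hw.1, ent_mapDomain_eq_neg_sum hw.1 (fun x => (x.1, x.2.2)),
    ent_mapDomain_eq_neg_sum hw.1]
  linarith

theorem ent_mapDomain_sub_add_ent_le {G : Type*} [AddCommGroup G] {w : (G × G) →₀ ℝ}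
    {q : G →₀ ℝ} (hw : IsPMF w) (hq : IsPMF q) :
    ent (w.mapDomain fun z => z.1 - z.2) + ent q ≤
      ent (subDist (fstMarg w) q) + ent (subDist q (sndMarg w)) := by
  set W := prodPMF w q
  have hW : IsPMF W := hw.prodPMF hq
  have hWfst : W.mapDomain Prod.fst = w := mapDomain_fst_prodPMF w hq
  -- For `ω = ((x, z), y)`, `φ ω = (A, B, C)` and `ψ ω = (x - y, y - z)` as in the header.
  set φ : (G × G) × G → G × (G × G) × G := fun ω => (ω.1.1 - ω.2, ω.1, ω.1.1 - ω.1.2)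
  set ψ : (G × G) × G → G × G := fun ω => (ω.1.1 - ω.2, ω.2 - ω.1.2)
  have hABC : ent (W.mapDomain φ) = ent w + ent q := by
    rw [ent_mapDomain_of_injective ?_, ent_prodPMF hw hq]
    rintro ⟨⟨x, z⟩, y⟩ ⟨⟨x', z'⟩, y'⟩ h
    simp only [φ, Prod.mk.injEq] at h
    obtain ⟨h, ⟨rfl, rfl⟩, -⟩ := h
    simp_all
  have hC : (W.mapDomain φ).mapDomain (fun x => x.2.2) = w.mapDomain fun z => z.1 - z.2 := by
    rw [← mapDomain_comp, ← hWfst, ← mapDomain_comp]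
    rfl
  have hBC : ent ((W.mapDomain φ).mapDomain Prod.snd) = ent w := by
    rw [← mapDomain_comp, ← hWfst]
    exact ent_mapDomain_comp_of_injective (g := fun s : G × G => (s, s.1 - s.2))
      (fun s t h => (Prod.mk.inj h).1) Prod.fst W
  have hAC : ent ((W.mapDomain φ).mapDomain fun x => (x.1, x.2.2)) = ent (W.mapDomain ψ) := by
    have hcomp : (fun x : G × (G × G) × G => (x.1, x.2.2)) ∘ φ =
        (fun u : G × G => (u.1, u.1 + u.2)) ∘ ψ := by
      funext ω
      simp only [φ, ψ, Function.comp_apply, Prod.mk.injEq, true_and]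
      abel
    rw [← mapDomain_comp, hcomp, ent_mapDomain_comp_of_injective]
    intro u v h
    simp only [Prod.mk.injEq] at h
    exact Prod.ext h.1 (by simpa [h.1] using h.2)
  have hfst : W.mapDomain (Prod.fst ∘ ψ) = subDist (fstMarg w) q := by
    rw [show Prod.fst ∘ ψ = (fun z : G × G => z.1 - z.2) ∘ Prod.map Prod.fst id from rfl,
      mapDomain_comp, mapDomain_prodMap_prodPMF, mapDomain_id]
    rfl
  have hsnd : W.mapDomain (Prod.snd ∘ ψ) = subDist q (sndMarg w) := by
    rw [show Prod.snd ∘ ψ = (fun z : G × G => z.1 - z.2) ∘ Prod.swap ∘ Prod.map Prod.snd id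
      from rfl, mapDomain_comp, mapDomain_comp, mapDomain_prodMap_prodPMF, mapDomain_id,
      mapDomain_swap_prodPMF]
    rfl
  have hsubadd := ent_le_ent_fst_add_ent_snd (hW.mapDomain ψ)
  have hsubmod := ent_submodular (hW.mapDomain φ)
  rw [← mapDomain_comp, ← mapDomain_comp, hfst, hsnd] at hsubadd
  rw [hABC, hC, hBC, hAC] at hsubmod
  linarith

end Entropy

/-- For random variables `X, Y, Z` taking values in finite subsets of an
abelian group `G`, one has `d*_ent(X, Z) ≤ d_ent(X, Y) + d_ent(Y, Z)`. -/
theorem statement1 {G : Type*} [AddCommGroup G] (p q r : G →₀ ℝ)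
    (hp : IsPMF p) (hq : IsPMF q) (hr : IsPMF r) :
    dEntStar p r ≤ dEnt p q + dEnt q r := by
  refine csSup_le ⟨_, prodPMF p r, hp.prodPMF hr, mapDomain_fst_prodPMF p hr,
    mapDomain_snd_prodPMF hp r, rfl⟩ ?_
  rintro d ⟨w, hw, rfl, rfl, rfl⟩
  have := ent_mapDomain_sub_add_ent_le hw hq
  rw [dEnt, dEnt]
  linarith

end
end

section
/- Let G be an abelian group, let H be a finite subgroup of G, and suppose that X is an H-valued random variable with H(X) ≥ log |H| − 1/8. Then log |H| − H(X) ≤ 2 d_ent(X, X). -/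
open Finset

noncomputable section

/-! Write `D(R) = log N - H(R)` (with `N = |H|`) for the relative entropy of a law `R` on `H`
with respect to the uniform law, and `Q` for the law of `X₁ - X₂`; the claim is
`D(Q) ≤ D(P) / 2`. The law `Q` is the image of `P` under the Markov kernel `x ↦ law of x - Y`
(`Y ~ P`), which fixes the uniform law and any two of whose rows share mass at least `1 - η`,
where `η = ‖P - uniform‖₁`. By Dobrushin's argument such a kernel contracts by the factor `η`
the masses `∑ (N R(x) - γ)⁻` (for `γ ≤ 1`) and `∑ (N R(x) - γ)⁺` (for `γ ≥ 1`), and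
`N D(R) = ∫₀¹ ∑ (N R(x) - γ)⁻ / γ dγ + ∫₁ᴺ ∑ (N R(x) - γ)⁺ / γ dγ`. Hence `D(Q) ≤ η D(P)`, and
Pinsker's inequality `η² ≤ 2 D(P) ≤ 1/4` gives `η ≤ 1/2`. -/

open Real InformationTheory Set Matrix

theorem monotoneOn_negPart_sub_div {t : ℝ} (ht : 0 ≤ t) :
    MonotoneOn (fun γ : ℝ => (t - γ)⁻ / γ) (Ici 0) := by
  intro x (hx : 0 ≤ x) y (hy : 0 ≤ y) hxy
  simp only [negPart_def, neg_sub]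
  rcases hx.eq_or_lt with rfl | hx
  · simp only [div_zero]; exact div_nonneg (le_max_right _ _) hy
  rw [div_le_div_iff₀ hx (hx.trans_le hxy)]
  rcases le_total x t with hxt | htx
  · rw [max_eq_right (by linarith : x - t ≤ 0)]
    exact le_trans (by simp) (mul_nonneg (le_max_right _ _) hx.le)
  · rw [max_eq_left (by linarith), max_eq_left (by linarith)]; nlinarith

theorem intervalIntegrable_negPart_sub_div {t a b : ℝ} (ht : 0 ≤ t) (ha : 0 ≤ a) (hb : 0 ≤ b) :
    IntervalIntegrable (fun γ : ℝ => (t - γ)⁻ / γ) MeasureTheory.volume a b :=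
  ((monotoneOn_negPart_sub_div ht).mono fun _ hγ => le_trans (le_min ha hb) hγ.1).intervalIntegrable

theorem integral_negPart_sub_div {t : ℝ} (ht : 0 ≤ t) :
    ∫ γ in (0 : ℝ)..1, (t - γ)⁻ / γ = klFun (min t 1) := by
  rcases le_total 1 t with h1t | ht1
  · rw [min_eq_right h1t, klFun_one]
    refine (intervalIntegral.integral_congr (g := fun _ => 0) fun γ hγ => ?_).trans (by simp)
    rw [Set.uIcc_of_le zero_le_one] at hγ
    simp [negPart_eq_zero.2 (by linarith [hγ.2] : 0 ≤ t - γ)]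
  rw [min_eq_left ht1]
  rcases ht.eq_or_lt with rfl | ht0
  · refine (intervalIntegral.integral_congr_ae (g := fun _ => 1) ?_).trans (by simp [klFun_zero])
    refine Filter.Eventually.of_forall fun γ hγ => ?_
    rw [Set.uIoc_of_le zero_le_one] at hγ
    simp [negPart_def, (max_eq_left hγ.1.le), hγ.1.ne']
  rw [← intervalIntegral.integral_add_adjacent_intervals
    (intervalIntegrable_negPart_sub_div ht le_rfl ht)
    (intervalIntegrable_negPart_sub_div ht ht zero_le_one)]
  have h0 : ∫ γ in (0 : ℝ)..t, (t - γ)⁻ / γ = 0 := by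
    refine (intervalIntegral.integral_congr (g := fun _ => 0) fun γ hγ => ?_).trans (by simp)
    rw [Set.uIcc_of_le ht] at hγ
    simp [negPart_eq_zero.2 (by linarith [hγ.2] : 0 ≤ t - γ)]
  have h1 : ∫ γ in t..1, (t - γ)⁻ / γ = ∫ γ in t..1, (1 - t * γ⁻¹) := by
    refine intervalIntegral.integral_congr fun γ hγ => ?_
    rw [Set.uIcc_of_le ht1] at hγ
    have hγ0 : 0 < γ := ht0.trans_le hγ.1
    simp only [negPart_def, neg_sub, max_eq_left (sub_nonneg.2 hγ.1)]
    field_simp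
  have hderiv : ∀ γ ∈ uIcc t 1, HasDerivAt (fun γ => γ - t * log γ) (1 - t * γ⁻¹) γ := by
    intro γ hγ
    rw [Set.uIcc_of_le ht1] at hγ
    exact (hasDerivAt_id γ).sub ((hasDerivAt_log (ht0.trans_le hγ.1).ne').const_mul t)
  have hcont : ContinuousOn (fun γ : ℝ => 1 - t * γ⁻¹) (uIcc t 1) := by
    refine continuousOn_const.sub (continuousOn_const.mul (continuousOn_inv₀.mono fun γ hγ => ?_))
    rw [Set.uIcc_of_le ht1] at hγ
    exact (ht0.trans_le hγ.1).ne'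
  rw [h0, h1, intervalIntegral.integral_eq_sub_of_hasDerivAt hderiv hcont.intervalIntegrable,
    klFun_apply]
  simp only [log_one]
  ring

theorem intervalIntegrable_posPart_sub_div {t a b : ℝ} (ha : 0 < a) (hb : 0 < b) :
    IntervalIntegrable (fun γ : ℝ => (t - γ)⁺ / γ) MeasureTheory.volume a b :=
  (ContinuousOn.div (by fun_prop) (by fun_prop) fun _ hγ =>
    (lt_of_lt_of_le (lt_min ha hb) hγ.1).ne').intervalIntegrable

theorem integral_posPart_sub_div {t M : ℝ} (htM : t ≤ M) :
    ∫ γ in (1 : ℝ)..M, (t - γ)⁺ / γ = klFun (max t 1) := by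
  rcases le_total t 1 with ht1 | h1t
  · rw [max_eq_right ht1, klFun_one]
    refine (intervalIntegral.integral_congr (g := fun _ => 0) fun γ hγ => ?_).trans (by simp)
    have : t ≤ γ := le_trans (le_min ht1 htM) hγ.1
    simp [posPart_eq_zero.2 (by linarith : t - γ ≤ 0)]
  rw [max_eq_left h1t]
  have ht0 : 0 < t := zero_lt_one.trans_le h1t
  rw [← intervalIntegral.integral_add_adjacent_intervals
    (intervalIntegrable_posPart_sub_div zero_lt_one ht0)
    (intervalIntegrable_posPart_sub_div ht0 (ht0.trans_le htM))]
  have h0 : ∫ γ in t..M, (t - γ)⁺ / γ = 0 := by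
    refine (intervalIntegral.integral_congr (g := fun _ => 0) fun γ hγ => ?_).trans (by simp)
    rw [Set.uIcc_of_le htM] at hγ
    simp [posPart_eq_zero.2 (by linarith [hγ.1] : t - γ ≤ 0)]
  have h1 : ∫ γ in (1 : ℝ)..t, (t - γ)⁺ / γ = ∫ γ in (1 : ℝ)..t, (t * γ⁻¹ - 1) := by
    refine intervalIntegral.integral_congr fun γ hγ => ?_
    rw [Set.uIcc_of_le h1t] at hγ
    have hγ0 : 0 < γ := zero_lt_one.trans_le hγ.1
    simp only [posPart_def, max_eq_left (sub_nonneg.2 hγ.2)]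
    field_simp
  have hderiv : ∀ γ ∈ uIcc 1 t, HasDerivAt (fun γ => t * log γ - γ) (t * γ⁻¹ - 1) γ := by
    intro γ hγ
    rw [Set.uIcc_of_le h1t] at hγ
    exact ((hasDerivAt_log (zero_lt_one.trans_le hγ.1).ne').const_mul t).sub (hasDerivAt_id γ)
  have hcont' : ContinuousOn (fun γ : ℝ => t * γ⁻¹ - 1) (uIcc 1 t) := by
    refine (continuousOn_const.mul (continuousOn_inv₀.mono fun γ hγ => ?_)).sub continuousOn_const
    rw [Set.uIcc_of_le h1t] at hγ
    exact (zero_lt_one.trans_le hγ.1).ne'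
  rw [h0, h1, intervalIntegral.integral_eq_sub_of_hasDerivAt hderiv hcont'.intervalIntegrable,
    klFun_apply]
  simp only [log_one]
  ring

theorem klFun_eq_integral {t M : ℝ} (ht : 0 ≤ t) (htM : t ≤ M) :
    klFun t = (∫ γ in (0 : ℝ)..1, (t - γ)⁻ / γ) + ∫ γ in (1 : ℝ)..M, (t - γ)⁺ / γ := by
  rw [integral_negPart_sub_div ht, integral_posPart_sub_div htM]
  rcases le_total t 1 with h | h <;> simp [h, klFun_one]

section Levels

variable {ι κ : Type*} [Fintype ι] [Fintype κ]

theorem intervalIntegrable_sum_negPart_sub_div {t : ι → ℝ} (ht : ∀ i, 0 ≤ t i) :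
    IntervalIntegrable (fun γ : ℝ => ∑ i, (t i - γ)⁻ / γ) MeasureTheory.volume 0 1 :=
  by simpa only [Finset.sum_fn] using IntervalIntegrable.sum Finset.univ fun i _ =>
    intervalIntegrable_negPart_sub_div (ht i) le_rfl zero_le_one

theorem intervalIntegrable_sum_posPart_sub_div (t : ι → ℝ) {M : ℝ} (hM : 0 < M) :
    IntervalIntegrable (fun γ : ℝ => ∑ i, (t i - γ)⁺ / γ) MeasureTheory.volume 1 M :=
  by simpa only [Finset.sum_fn] using IntervalIntegrable.sum Finset.univ fun i _ =>
    intervalIntegrable_posPart_sub_div (t := t i) zero_lt_one hM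

theorem sum_klFun_eq_integral {t : ι → ℝ} {M : ℝ} (ht : ∀ i, 0 ≤ t i) (htM : ∀ i, t i ≤ M)
    (hM : 0 < M) :
    ∑ i, klFun (t i) = (∫ γ in (0 : ℝ)..1, ∑ i, (t i - γ)⁻ / γ)
      + ∫ γ in (1 : ℝ)..M, ∑ i, (t i - γ)⁺ / γ := by
  rw [intervalIntegral.integral_finsetSum, intervalIntegral.integral_finsetSum,
    ← Finset.sum_add_distrib]
  · exact Finset.sum_congr rfl fun i _ => klFun_eq_integral (ht i) (htM i)
  · exact fun i _ => intervalIntegrable_posPart_sub_div zero_lt_one hM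
  · exact fun i _ => intervalIntegrable_negPart_sub_div (ht i) le_rfl zero_le_one

theorem sum_klFun_le_mul_of_levels {t : ι → ℝ} {t' : κ → ℝ} {M η : ℝ}
    (ht : ∀ i, 0 ≤ t i) (htM : ∀ i, t i ≤ M) (ht' : ∀ j, 0 ≤ t' j) (ht'M : ∀ j, t' j ≤ M)
    (hM : 1 ≤ M)
    (hneg : ∀ γ ∈ Icc (0 : ℝ) 1, ∑ j, (t' j - γ)⁻ ≤ η * ∑ i, (t i - γ)⁻)
    (hpos : ∀ γ ∈ Icc 1 M, ∑ j, (t' j - γ)⁺ ≤ η * ∑ i, (t i - γ)⁺) :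
    ∑ j, klFun (t' j) ≤ η * ∑ i, klFun (t i) := by
  have hM0 : 0 < M := zero_lt_one.trans_le hM
  rw [sum_klFun_eq_integral ht htM hM0, sum_klFun_eq_integral ht' ht'M hM0, mul_add,
    ← intervalIntegral.integral_const_mul, ← intervalIntegral.integral_const_mul]
  gcongr ?_ + ?_
  · refine intervalIntegral.integral_mono_on zero_le_one
      (intervalIntegrable_sum_negPart_sub_div ht')
      ((intervalIntegrable_sum_negPart_sub_div ht).const_mul η) fun γ hγ => ?_
    simp only [← Finset.sum_div, ← mul_div_assoc]
    exact div_le_div_of_nonneg_right (hneg γ hγ) hγ.1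
  · refine intervalIntegral.integral_mono_on hM
      (intervalIntegrable_sum_posPart_sub_div t' hM0)
      ((intervalIntegrable_sum_posPart_sub_div t hM0).const_mul η) fun γ hγ => ?_
    simp only [← Finset.sum_div, ← mul_div_assoc]
    exact div_le_div_of_nonneg_right (hpos γ hγ) (zero_le_one.trans hγ.1)

end Levels

section Dobrushin

variable {ι κ : Type*} [Fintype ι] [Fintype κ] {K : Matrix ι κ ℝ} {η : ℝ}

theorem one_sub_mul_sum_le_sum_min_vecMul (hK : ∀ i j, 0 ≤ K i j)
    (hη : ∀ i i', 1 - η ≤ ∑ j, min (K i j) (K i' j)) {u v : ι → ℝ} (hu : ∀ i, 0 ≤ u i)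
    (hv : ∀ i, 0 ≤ v i) (huv : ∑ i, u i ≤ ∑ i, v i) :
    (1 - η) * ∑ i, u i ≤ ∑ j, min ((u ᵥ* K) j) ((v ᵥ* K) j) := by
  set a := ∑ i, u i
  set b := ∑ i, v i
  have ha : 0 ≤ a := Finset.sum_nonneg fun i _ => hu i
  have vecMul_nonneg {w : ι → ℝ} (hw : ∀ i, 0 ≤ w i) (j : κ) : 0 ≤ (w ᵥ* K) j :=
    Finset.sum_nonneg fun i _ => mul_nonneg (hw i) (hK i j)
  rcases (ha.trans huv).eq_or_lt with hb | hb
  · rw [show a = 0 by linarith, mul_zero]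
    exact Finset.sum_nonneg fun j _ => le_min (vecMul_nonneg hu j) (vecMul_nonneg hv j)
  set W : κ → ℝ := fun j => ∑ i, ∑ i', u i * v i' * min (K i j) (K i' j)
  have hW : ∀ j, W j ≤ b * min ((u ᵥ* K) j) ((v ᵥ* K) j) := by
    intro j
    rw [mul_min_of_nonneg _ _ hb.le]
    refine le_min ?_ ((?_ : _ ≤ a * (v ᵥ* K) j).trans
      (mul_le_mul_of_nonneg_right huv (vecMul_nonneg hv j)))
    · rw [mul_comm, vecMul, dotProduct, Finset.sum_mul_sum]
      exact Finset.sum_le_sum fun i _ => Finset.sum_le_sum fun i' _ =>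
        (mul_le_mul_of_nonneg_left (min_le_left _ _) (mul_nonneg (hu i) (hv i'))).trans_eq
          (by ring)
    · rw [vecMul, dotProduct, Finset.sum_mul_sum]
      exact Finset.sum_le_sum fun i _ => Finset.sum_le_sum fun i' _ =>
        (mul_le_mul_of_nonneg_left (min_le_right _ _) (mul_nonneg (hu i) (hv i'))).trans_eq
          (by ring)
  have hsumW : (1 - η) * a * b ≤ ∑ j, W j := by
    calc (1 - η) * a * b = ∑ i, ∑ i', u i * v i' * (1 - η) := by
          rw [mul_assoc, Finset.sum_mul_sum, Finset.mul_sum]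
          exact Finset.sum_congr rfl fun i _ => by
            rw [Finset.mul_sum]; exact Finset.sum_congr rfl fun _ _ => by ring
      _ ≤ ∑ i, ∑ i', u i * v i' * ∑ j, min (K i j) (K i' j) :=
          Finset.sum_le_sum fun i _ => Finset.sum_le_sum fun i' _ =>
            mul_le_mul_of_nonneg_left (hη i i') (mul_nonneg (hu i) (hv i'))
      _ = ∑ j, W j := by
          simp only [W, Finset.mul_sum]
          exact (Finset.sum_congr rfl fun i _ => Finset.sum_comm).trans Finset.sum_comm
  refine le_of_mul_le_mul_right ?_ hb
  calc (1 - η) * a * b ≤ ∑ j, W j := hsumW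
    _ ≤ ∑ j, b * min ((u ᵥ* K) j) ((v ᵥ* K) j) := Finset.sum_le_sum fun j _ => hW j
    _ = _ := by rw [← Finset.mul_sum, mul_comm]

theorem sum_vecMul_of_sum_row_eq_one (hrow : ∀ i, ∑ j, K i j = 1) (u : ι → ℝ) :
    ∑ j, (u ᵥ* K) j = ∑ i, u i := by
  simp only [vecMul, dotProduct]
  rw [Finset.sum_comm]
  exact Finset.sum_congr rfl fun i _ => by rw [← Finset.mul_sum, hrow, mul_one]

theorem sum_posPart_vecMul_le (hK : ∀ i j, 0 ≤ K i j) (hrow : ∀ i, ∑ j, K i j = 1)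
    (hη : ∀ i i', 1 - η ≤ ∑ j, min (K i j) (K i' j)) {f : ι → ℝ} (hf : ∑ i, f i ≤ 0) :
    ∑ j, ((f ᵥ* K) j)⁺ ≤ η * ∑ i, (f i)⁺ := by
  have hsplit : f ᵥ* K = (fun i => (f i)⁺) ᵥ* K - (fun i => (f i)⁻) ᵥ* K := by
    rw [← sub_vecMul]; congr 1; funext i; exact (posPart_sub_negPart (f i)).symm
  have hle : ∑ i, (f i)⁺ ≤ ∑ i, (f i)⁻ := by
    rw [← sub_nonpos, ← Finset.sum_sub_distrib]
    simpa only [posPart_sub_negPart] using hf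
  have hpos_sub (a b : ℝ) : (a - b)⁺ = a - min a b := by
    rw [posPart_def]; rcases le_total a b with h | h <;> simp [h]
  have hmin := one_sub_mul_sum_le_sum_min_vecMul hK hη (fun i => posPart_nonneg (f i))
    (fun i => negPart_nonneg (f i)) hle
  simp only [hsplit, Pi.sub_apply, hpos_sub, Finset.sum_sub_distrib,
    sum_vecMul_of_sum_row_eq_one hrow]
  linarith

theorem sum_negPart_vecMul_le (hK : ∀ i j, 0 ≤ K i j) (hrow : ∀ i, ∑ j, K i j = 1)
    (hη : ∀ i i', 1 - η ≤ ∑ j, min (K i j) (K i' j)) {f : ι → ℝ} (hf : 0 ≤ ∑ i, f i) :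
    ∑ j, ((f ᵥ* K) j)⁻ ≤ η * ∑ i, (f i)⁻ := by
  simpa [neg_vecMul, posPart_neg] using
    sum_posPart_vecMul_le hK hrow hη (f := -f) (by simpa using hf)

end Dobrushin

theorem card_mul_klFun_le_sum {ι : Type*} (s : Finset ι) {t : ι → ℝ} (ht : ∀ i ∈ s, 0 ≤ t i) :
    s.card * klFun ((∑ i ∈ s, t i) / s.card) ≤ ∑ i ∈ s, klFun (t i) := by
  rcases s.eq_empty_or_nonempty with rfl | hs
  · simp
  have hk : (0 : ℝ) < s.card := by exact_mod_cast hs.card_pos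
  have := convexOn_klFun.map_sum_le (t := s) (w := fun _ => (s.card : ℝ)⁻¹) (p := t)
    (fun _ _ => by positivity) (by simp [hk.ne']) ht
  simp only [smul_eq_mul, ← Finset.mul_sum] at this
  rw [div_eq_inv_mul]
  calc _ ≤ (s.card : ℝ) * ((s.card : ℝ)⁻¹ * ∑ i ∈ s, klFun (t i)) := by gcongr
    _ = _ := by field_simp

theorem monotoneOn_logit_sub_four_mul :
    MonotoneOn (fun s => log s - log (1 - s) - 4 * s) (Ioo 0 1) := by
  have hderiv : ∀ s ∈ Ioo (0 : ℝ) 1, HasDerivAt (fun s => log s - log (1 - s) - 4 * s)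
      (s⁻¹ + (1 - s)⁻¹ - 4) s := by
    intro s hs
    have h1 := (hasDerivAt_log (sub_pos.2 hs.2).ne').comp s ((hasDerivAt_id s).const_sub 1)
    refine (((hasDerivAt_log hs.1.ne').sub h1).sub ((hasDerivAt_id s).const_mul 4)).congr_deriv ?_
    simp only [mul_neg, mul_one, sub_neg_eq_add]
  refine monotoneOn_of_deriv_nonneg (convex_Ioo 0 1)
    (fun s hs => (hderiv s hs).continuousAt.continuousWithinAt)
    (fun s hs => (hderiv s (interior_subset hs)).differentiableAt.differentiableWithinAt)
    fun s hs => ?_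
  rw [interior_Ioo] at hs
  rw [(hderiv s hs).deriv]
  have h0 := hs.1
  have h1 : 0 < 1 - s := sub_pos.2 hs.2
  have : s⁻¹ + (1 - s)⁻¹ - 4 = (1 - 2 * s) ^ 2 / (s * (1 - s)) := by
    field_simp; ring
  rw [this]; positivity

theorem two_mul_sq_sub_le_two_point_klFun {a b : ℝ} (hb : 0 < b) (hba : b ≤ a) (ha : a ≤ 1) :
    2 * (a - b) ^ 2 ≤ b * klFun (a / b) + (1 - b) * klFun ((1 - a) / (1 - b)) := by
  set g : ℝ → ℝ := fun s => b * klFun (s / b) + (1 - b) * klFun ((1 - s) / (1 - b))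
    - 2 * (s - b) ^ 2
  have hderiv : ∀ s ∈ Ioo b a, HasDerivAt g
      ((log s - log (1 - s) - 4 * s) - (log b - log (1 - b) - 4 * b)) s := by
    intro s hs
    have hs0 : 0 < s := hb.trans hs.1
    have hs1 : 0 < 1 - s := by linarith [hs.2]
    have hb1 : 0 < 1 - b := by linarith [hs.1]
    have h1 := (hasDerivAt_klFun (div_pos hs0 hb).ne').comp s ((hasDerivAt_id s).div_const b)
    have h2 := (hasDerivAt_klFun (div_pos hs1 hb1).ne').comp s
      (((hasDerivAt_id s).const_sub 1).div_const (1 - b))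
    have h3 := ((hasDerivAt_id s).sub_const b).pow 2
    refine (((h1.const_mul b).add (h2.const_mul (1 - b))).sub (h3.const_mul 2)).congr_deriv ?_
    simp only [id, log_div hs0.ne' hb.ne', log_div hs1.ne' hb1.ne']
    field_simp
    ring
  have hmono : MonotoneOn g (Icc b a) := by
    refine monotoneOn_of_deriv_nonneg (convex_Icc b a)
      (by fun_prop) (fun s hs => ?_) fun s hs => ?_ <;> rw [interior_Icc] at hs
    · exact (hderiv s hs).differentiableAt.differentiableWithinAt
    · rw [(hderiv s hs).deriv, sub_nonneg]
      have hs1 : s < 1 := hs.2.trans_le ha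
      exact monotoneOn_logit_sub_four_mul ⟨hb, hs.1.trans hs1⟩ ⟨hb.trans hs.1, hs1⟩ hs.1.le
  have hgb : g b = 0 := by
    rcases eq_or_ne (1 - b) 0 with h | h <;> simp [g, h, hb.ne', klFun_one]
  have := hmono ⟨le_rfl, hba⟩ ⟨hba, le_rfl⟩ hba
  simp only [hgb, g] at this
  linarith

theorem two_mul_sq_sub_div_le_two_point_klFun {k σ N : ℝ} (hk : 0 < k) (hkσ : k ≤ σ)
    (hσN : σ ≤ N) :
    2 * (σ - k) ^ 2 / N ≤ k * klFun (σ / k) + (N - k) * klFun ((N - σ) / (N - k)) := by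
  have hN : 0 < N := hk.trans_le (hkσ.trans hσN)
  have h := two_mul_sq_sub_le_two_point_klFun (a := σ / N) (b := k / N) (by positivity)
    (by gcongr) ((div_le_one hN).2 hσN)
  rw [div_div_div_cancel_right₀ hN.ne', one_sub_div hN.ne', one_sub_div hN.ne',
    div_div_div_cancel_right₀ hN.ne'] at h
  calc 2 * (σ - k) ^ 2 / N = 2 * (σ / N - k / N) ^ 2 * N := by field_simp
    _ ≤ (k / N * klFun (σ / k) + (N - k) / N * klFun ((N - σ) / (N - k))) * N := by gcongr
    _ = _ := by field_simp

theorem sq_sum_abs_sub_one_le_of_sum_eq_card {ι : Type*} [Fintype ι] {t : ι → ℝ}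
    (ht : ∀ i, 0 ≤ t i) (hsum : ∑ i, t i = Fintype.card ι) :
    (∑ i, |t i - 1|) ^ 2 ≤ 2 * Fintype.card ι * ∑ i, klFun (t i) := by
  classical
  set N : ℝ := (Fintype.card ι : ℝ)
  set T := Finset.univ.filter fun i => 1 < t i
  set Tc := Finset.univ.filter fun i => ¬1 < t i
  set k : ℝ := (T.card : ℝ)
  set σ := ∑ i ∈ T, t i
  have hcard : (Tc.card : ℝ) = N - k := by
    rw [eq_sub_iff_add_eq, add_comm, ← Nat.cast_add, Finset.card_filter_add_card_filter_not,
      Finset.card_univ]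
  have hσc : ∑ i ∈ Tc, t i = N - σ := by
    rw [eq_sub_iff_add_eq, add_comm, Finset.sum_filter_add_sum_filter_not, hsum]
  have habs : ∑ i, |t i - 1| = 2 * (σ - k) := by
    rw [← Finset.sum_filter_add_sum_filter_not _ (fun i => 1 < t i),
      Finset.sum_congr rfl fun i hi => abs_of_pos (sub_pos.2 (Finset.mem_filter.1 hi).2),
      Finset.sum_congr rfl fun i hi =>
        abs_of_nonpos (sub_nonpos.2 (not_lt.1 (Finset.mem_filter.1 hi).2)),
      Finset.sum_sub_distrib, Finset.sum_neg_distrib, Finset.sum_sub_distrib]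
    simp only [Finset.sum_const, nsmul_eq_mul, mul_one]
    rw [hσc, hcard]; ring
  have hjensen : k * klFun (σ / k) + (N - k) * klFun ((N - σ) / (N - k)) ≤ ∑ i, klFun (t i) := by
    rw [← Finset.sum_filter_add_sum_filter_not _ (fun i => 1 < t i), ← hcard, ← hσc]
    exact add_le_add (card_mul_klFun_le_sum T fun i _ => ht i)
      (card_mul_klFun_le_sum Tc fun i _ => ht i)
  rw [habs]
  rcases T.eq_empty_or_nonempty with hT | hT
  · have hkl0 : 0 ≤ ∑ i, klFun (t i) := Finset.sum_nonneg fun i _ => klFun_nonneg (ht i)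
    simp [σ, k, hT]; positivity
  have hk : 0 < k := Nat.cast_pos.2 hT.card_pos
  have hkσ : k ≤ σ := by
    simpa [k] using Finset.card_nsmul_le_sum T t 1 fun i hi => (Finset.mem_filter.1 hi).2.le
  have hσN : σ ≤ N := by
    linarith [Finset.sum_nonneg fun i (_ : i ∈ Tc) => ht i]
  have hbin := two_mul_sq_sub_div_le_two_point_klFun hk hkσ hσN
  rw [div_le_iff₀ (hk.trans_le (hkσ.trans hσN))] at hbin
  nlinarith

theorem sum_klFun_card_mul_eq {ι : Type*} [Fintype ι] {P : ι → ℝ} (hP1 : ∑ i, P i = 1) :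
    ∑ i, klFun (Fintype.card ι * P i)
      = Fintype.card ι * (log (Fintype.card ι) - ∑ i, negMulLog (P i)) := by
  set N : ℝ := (Fintype.card ι : ℝ)
  have hN : 0 < N :=
    Nat.cast_pos.2 (Finset.card_pos.2 (Finset.nonempty_of_sum_ne_zero (hP1 ▸ one_ne_zero)))
  have key : ∀ i, klFun (N * P i) = N * (P i * log N - negMulLog (P i)) + 1 - N * P i := by
    intro i
    rcases eq_or_ne (P i) 0 with h | h
    · simp [h, klFun_zero]
    · rw [klFun_apply, negMulLog, log_mul hN.ne' h]; ring
  simp only [key, Finset.sum_sub_distrib, Finset.sum_add_distrib, ← Finset.mul_sum,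
    ← Finset.sum_mul, hP1, Finset.sum_const, Finset.card_univ, nsmul_eq_mul]
  ring

theorem sq_sum_abs_sub_inv_card_le {ι : Type*} [Fintype ι] {P : ι → ℝ} (hP0 : ∀ i, 0 ≤ P i)
    (hP1 : ∑ i, P i = 1) :
    (∑ i, |P i - (Fintype.card ι : ℝ)⁻¹|) ^ 2
      ≤ 2 * (log (Fintype.card ι) - ∑ i, negMulLog (P i)) := by
  set N : ℝ := (Fintype.card ι : ℝ)
  have hN : 0 < N :=
    Nat.cast_pos.2 (Finset.card_pos.2 (Finset.nonempty_of_sum_ne_zero (hP1 ▸ one_ne_zero)))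
  have habs : ∀ i, |N * P i - 1| = N * |P i - N⁻¹| := fun i => by
    rw [← abs_of_pos hN, ← abs_mul, abs_of_pos hN, mul_sub, mul_inv_cancel₀ hN.ne']
  have := sq_sum_abs_sub_one_le_of_sum_eq_card (t := fun i => N * P i)
    (fun i => mul_nonneg hN.le (hP0 i))
    (by rw [← Finset.mul_sum, hP1, mul_one])
  rw [sum_klFun_card_mul_eq hP1] at this
  simp only [habs, ← Finset.mul_sum] at this
  rw [mul_pow, show 2 * N * (N * (log N - ∑ i, negMulLog (P i)))
    = N ^ 2 * (2 * (log N - ∑ i, negMulLog (P i))) by ring] at this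
  exact le_of_mul_le_mul_left this (by positivity)

theorem one_sub_le_sum_min {κ : Type*} [Fintype κ] {p q r : κ → ℝ} (hp : ∑ j, p j = 1)
    (hq : ∑ j, q j = 1) :
    1 - (∑ j, |p j - r j| + ∑ j, |q j - r j|) / 2 ≤ ∑ j, min (p j) (q j) := by
  have key : ∀ j, p j + q j - |p j - r j| - |q j - r j| ≤ 2 * min (p j) (q j) := by
    intro j
    rcases le_total (p j) (q j) with h | h
    · rw [min_eq_left h]
      linarith [le_abs_self (q j - r j), neg_abs_le (p j - r j)]
    · rw [min_eq_right h]
      linarith [le_abs_self (p j - r j), neg_abs_le (q j - r j)]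
  have := Finset.sum_le_sum fun j (_ : j ∈ Finset.univ) => key j
  simp only [Finset.sum_sub_distrib, Finset.sum_add_distrib, ← Finset.mul_sum, hp, hq] at this
  linarith

section Convolution

variable {A : Type*} [AddCommGroup A] [Fintype A] {P : A → ℝ}

/-- Row `x` is the law of `x - Y` for `Y ~ P`, so `P ᵥ* subKernel P` is the law of `X₁ - X₂`. -/
def subKernel (P : A → ℝ) : Matrix A A ℝ := Matrix.of fun x s => P (x - s)

theorem sum_subKernel_row (hP1 : ∑ x, P x = 1) (x : A) : ∑ s, subKernel P x s = 1 :=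
  (Equiv.sum_comp (Equiv.subLeft x) P).trans hP1

theorem sum_subKernel_col (hP1 : ∑ x, P x = 1) (s : A) : ∑ x, subKernel P x s = 1 :=
  (Equiv.sum_comp (Equiv.subRight s) P).trans hP1

theorem one_sub_le_sum_min_subKernel (hP1 : ∑ x, P x = 1) (x z : A) :
    1 - ∑ y, |P y - (Fintype.card A : ℝ)⁻¹| ≤ ∑ s, min (subKernel P x s) (subKernel P z s) := by
  have hdist : ∀ x : A, ∑ s, |subKernel P x s - (Fintype.card A : ℝ)⁻¹|
      = ∑ y, |P y - (Fintype.card A : ℝ)⁻¹| := fun x =>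
    Equiv.sum_comp (Equiv.subLeft x) fun y => |P y - (Fintype.card A : ℝ)⁻¹|
  have := one_sub_le_sum_min (r := fun _ => (Fintype.card A : ℝ)⁻¹)
    (sum_subKernel_row hP1 x) (sum_subKernel_row hP1 z)
  rw [hdist, hdist] at this
  linarith

theorem sum_klFun_card_mul_conv_le (hP0 : ∀ x, 0 ≤ P x) (hP1 : ∑ x, P x = 1) :
    ∑ s, klFun (Fintype.card A * ∑ x, P x * P (x - s))
      ≤ (∑ y, |P y - (Fintype.card A : ℝ)⁻¹|) * ∑ x, klFun (Fintype.card A * P x) := by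
  set N : ℝ := (Fintype.card A : ℝ)
  have hK : ∀ x s, 0 ≤ subKernel P x s := fun x s => hP0 (x - s)
  have hrow := sum_subKernel_row hP1
  have hη := one_sub_le_sum_min_subKernel hP1
  have hlevel : ∀ γ, (fun x => N * P x - γ) ᵥ* subKernel P
      = fun s => N * (P ᵥ* subKernel P) s - γ := by
    intro γ; funext s
    simp only [vecMul, dotProduct, sub_mul, Finset.sum_sub_distrib, mul_assoc, ← Finset.mul_sum]
    rw [sum_subKernel_col hP1, mul_one]
  have hsum : ∀ γ, ∑ x, (N * P x - γ) = N * (1 - γ) := by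
    intro γ
    simp only [Finset.sum_sub_distrib, ← Finset.mul_sum, hP1, Finset.sum_const, Finset.card_univ,
      nsmul_eq_mul]
    ring
  have hN : 1 ≤ N := Nat.one_le_cast.2 Fintype.card_pos
  have hle_one {R : A → ℝ} (hR0 : ∀ x, 0 ≤ R x) (hR1 : ∑ x, R x = 1) (x : A) : N * R x ≤ N :=
    mul_le_of_le_one_right (by positivity)
      (hR1 ▸ Finset.single_le_sum (fun y _ => hR0 y) (Finset.mem_univ x))
  have hQ0 : ∀ s, 0 ≤ (P ᵥ* subKernel P) s := fun s =>
    Finset.sum_nonneg fun x _ => mul_nonneg (hP0 x) (hK x s)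
  have hQ1 : ∑ s, (P ᵥ* subKernel P) s = 1 := (sum_vecMul_of_sum_row_eq_one hrow P).trans hP1
  refine sum_klFun_le_mul_of_levels (fun x => by have := hP0 x; positivity) (hle_one hP0 hP1)
    (fun s => by have := hQ0 s; positivity) (hle_one hQ0 hQ1) hN (fun γ hγ => ?_) fun γ hγ => ?_
  · have := sum_negPart_vecMul_le hK hrow hη (f := fun x => N * P x - γ)
      (by rw [hsum]; exact mul_nonneg (by positivity) (sub_nonneg.2 hγ.2))
    rwa [hlevel] at this
  · have := sum_posPart_vecMul_le hK hrow hη (f := fun x => N * P x - γ)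
      (by rw [hsum]; exact mul_nonpos_of_nonneg_of_nonpos (by positivity) (sub_nonpos.2 hγ.1))
    rwa [hlevel] at this

end Convolution

theorem log_card_sub_entropy_le_two_mul {A : Type*} [AddCommGroup A] [Fintype A] {P : A → ℝ}
    (hP0 : ∀ x, 0 ≤ P x) (hP1 : ∑ x, P x = 1)
    (hent : log (Fintype.card A) - ∑ x, negMulLog (P x) ≤ 1 / 8) :
    log (Fintype.card A) - ∑ x, negMulLog (P x)
      ≤ 2 * (∑ s, negMulLog (∑ x, P x * P (x - s)) - ∑ x, negMulLog (P x)) := by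
  set N : ℝ := (Fintype.card A : ℝ)
  set η := ∑ y, |P y - N⁻¹|
  set D := log N - ∑ x, negMulLog (P x)
  have hN : 0 < N := Nat.cast_pos.2 Fintype.card_pos
  have hQ1 : ∑ s, ∑ x, P x * P (x - s) = 1 :=
    (sum_vecMul_of_sum_row_eq_one (sum_subKernel_row hP1) P).trans hP1
  have hcontr : log N - ∑ s, negMulLog (∑ x, P x * P (x - s)) ≤ η * D := by
    have := sum_klFun_card_mul_conv_le hP0 hP1
    rwa [sum_klFun_card_mul_eq hP1, sum_klFun_card_mul_eq hQ1, mul_left_comm,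
      mul_le_mul_iff_right₀ hN] at this
  have hpinsker : η ^ 2 ≤ 2 * D := sq_sum_abs_sub_inv_card_le hP0 hP1
  have hD : 0 ≤ D := by nlinarith [sq_nonneg η]
  have hη : η ≤ 1 / 2 := by
    nlinarith [Finset.sum_nonneg fun y (_ : y ∈ Finset.univ) => abs_nonneg (P y - N⁻¹)]
  nlinarith

theorem sum_support_eq_sum_subtype {α M β : Type*} [Zero M] [AddCommMonoid β] {s : Set α}
    [Fintype s] (f : α →₀ M) (hf : (f.support : Set α) ⊆ s) (g : α → M → β)
    (hg : ∀ a, g a 0 = 0) :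
    ∑ a ∈ f.support, g a (f a) = ∑ a : s, g a (f a) := by
  classical
  rw [Finset.sum_subset (s₂ := s.toFinset) (fun a ha => Set.mem_toFinset.2 (hf ha))
    fun a _ ha => by rw [Finsupp.notMem_support_iff.1 ha, hg]]
  exact Finset.sum_subtype _ (fun a => Set.mem_toFinset) _

theorem subDist_apply {G : Type*} [AddCommGroup G] (p q : G →₀ ℝ) (s : G) :
    subDist p q s = ∑ x ∈ p.support, p x * q (x - s) := by
  classical
  rw [subDist, Finsupp.mapDomain, Finsupp.sum_apply, prodPMF, Finsupp.onFinset_sum _ (by simp),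
    Finset.sum_product]
  refine Finset.sum_congr rfl fun x _ => ?_
  simp only [Finsupp.single_apply, sub_eq_iff_comm (a := x)]
  rw [Finset.sum_ite_eq]
  split_ifs with h
  · rfl
  · rw [Finsupp.notMem_support_iff.1 h, mul_zero]

theorem support_subDist_subset {G : Type*} [AddCommGroup G] {H : AddSubgroup G} {p q : G →₀ ℝ}
    (hp : (p.support : Set G) ⊆ H) (hq : (q.support : Set G) ⊆ H) :
    ((subDist p q).support : Set G) ⊆ H := by
  intro s hs
  rw [Finset.mem_coe, Finsupp.mem_support_iff, subDist_apply] at hs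
  obtain ⟨x, hx, hne⟩ := Finset.exists_ne_zero_of_sum_ne_zero hs
  have hxs : x - s ∈ H := hq (Finsupp.mem_support_iff.2 (right_ne_zero_of_mul hne))
  simpa using sub_mem (hp hx) hxs

/-- Let `H` be a finite subgroup of an abelian group `G` (with underlying
finite set `HS`), and let `X ~ p` be an `H`-valued random variable with
`H(X) ≥ log |H| - 1/8`. Then `log |H| - H(X) ≤ 2 d_ent(X, X)`. -/
theorem statement14 {G : Type*} [AddCommGroup G] (H : AddSubgroup G) (HS : Finset G)
    (hHS : (HS : Set G) = (H : Set G)) (p : G →₀ ℝ) (hp : IsPMF p)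
    (hsupp : (p.support : Set G) ⊆ (H : Set G))
    (hent : Real.log (HS.card : ℝ) - 1 / 8 ≤ ent p) :
    Real.log (HS.card : ℝ) - ent p ≤ 2 * dEnt p p := by
  have hmem : ∀ x, x ∈ HS ↔ x ∈ H := fun x => by rw [← Finset.mem_coe, hHS, SetLike.mem_coe]
  let _ : Fintype H := Fintype.ofFinset HS hmem
  have hcard : (HS.card : ℝ) = Fintype.card H :=
    congrArg Nat.cast (Fintype.card_ofFinset (p := (H : Set G)) HS hmem).symm
  have hP1 : ∑ x : H, p x = 1 :=
    (sum_support_eq_sum_subtype p hsupp (fun _ a => a) fun _ => rfl).symm.trans hp.2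
  have hentP : ent p = ∑ x : H, negMulLog (p x) :=
    sum_support_eq_sum_subtype p hsupp (fun _ => negMulLog) fun _ => negMulLog_zero
  have hentQ : ent (subDist p p) = ∑ s : H, negMulLog (∑ x : H, p x * p ↑(x - s)) := by
    rw [ent, sum_support_eq_sum_subtype _ (support_subDist_subset hsupp hsupp) (fun _ => negMulLog)
      fun _ => negMulLog_zero]
    refine Finset.sum_congr rfl fun s _ => ?_
    rw [subDist_apply,
      sum_support_eq_sum_subtype p hsupp (fun x a => a * p (x - s)) fun _ => zero_mul _]
    rfl
  rw [hcard, hentP] at hent ⊢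
  rw [dEnt, hentQ, hentP]
  have := log_card_sub_entropy_le_two_mul (P := fun x : H => p x) (fun x => hp.1 x) hP1
    (by linarith)
  linarith

end
end

section
/- Let H be a finite abelian group and suppose p₁, p₂, p₃ : H → R_{≥0} are three probability distributions on H such that ‖p₁ − u_H‖₁ + ‖p₂ − u_H‖₁ + ‖p₃ − u_H‖₁ ≤ 1, where u_H is the uniform distribution on H and ‖p − u_H‖₁ := Σ_{x ∈ H} |p(x) − 1/|H||. Then there exists a pair of random variables (X, Y) taking values in H (not necessarily independent) such that the distribution of X is p₁, the distribution of Y is p₂, and the distribution of X − Y is p₃. -/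
open Finset

noncomputable section

/-!
The couplings form the image of the simplex on `H × H` under the linear map sending `w` to its
three marginals, so by Hahn–Banach separation it suffices to prove the dual inequality:
`c ≤ f x + g y + h (x - y)` for all `x, y` implies `c ≤ ∑ p₁ f + ∑ p₂ g + ∑ p₃ h`.

Normalise to `min f = min g = 0` and let `k ≥ 0` be the positive part of `c - h` (shifted by the
same constants), so that `k (x - y) ≤ f x + g y`; with `M := max k`, the functions `f` and `g`
may be truncated at `M`. For the uniform distribution the inequality holds with `M / 2` to spare,
by translation invariance of uniform averages: `𝔼 k ≤ 𝔼 f` and `𝔼 k ≤ 𝔼 g` (translate by the zeros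
of `g` and `f`), and `M ≤ 𝔼 f + 𝔼 g` (translate by a maximiser of `k`). Replacing the uniform
distribution by `pᵢ` moves the average of a `[0, M]`-valued function by at most
`M ‖pᵢ - u_H‖₁ / 2`, and these three errors add up to at most `M / 2`.
-/

open scoped BigOperators

section Averages

variable {ι : Type*} [Fintype ι]

def l1DistUniform (p : ι → ℝ) : ℝ := ∑ i, |p i - (Fintype.card ι : ℝ)⁻¹|

theorem sum_mul_sub_sum_mul_le {p q φ : ι → ℝ} {M : ℝ} (hpq : ∑ i, p i = ∑ i, q i)
    (hφ : ∀ i, φ i ∈ Set.Icc 0 M) :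
    ∑ i, p i * φ i - ∑ i, q i * φ i ≤ M * (∑ i, |p i - q i|) / 2 := by
  have key : ∀ i, (p i - q i) * φ i ≤ M * (|p i - q i| + (p i - q i)) / 2 := by
    intro i
    obtain ⟨hφ₀, hφM⟩ := hφ i
    rcases le_or_gt 0 (p i - q i) with h | h
    · rw [abs_of_nonneg h]; nlinarith
    · rw [abs_of_neg h]; nlinarith
  have hsum : ∑ i, (p i - q i) = 0 := by rw [sum_sub_distrib, hpq, sub_self]
  calc ∑ i, p i * φ i - ∑ i, q i * φ i = ∑ i, (p i - q i) * φ i := by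
        simp only [sub_mul, sum_sub_distrib]
    _ ≤ ∑ i, M * (|p i - q i| + (p i - q i)) / 2 := sum_le_sum fun i _ => key i
    _ = M * (∑ i, |p i - q i|) / 2 := by
        rw [← sum_div, ← mul_sum, sum_add_distrib, hsum, add_zero]

theorem abs_sum_mul_sub_expect_le [Nonempty ι] {p φ : ι → ℝ} {M : ℝ} (hp : ∑ i, p i = 1)
    (hφ : ∀ i, φ i ∈ Set.Icc 0 M) :
    |∑ i, p i * φ i - 𝔼 i, φ i| ≤ M * l1DistUniform p / 2 := by
  have hcard : (Fintype.card ι : ℝ) ≠ 0 := Nat.cast_ne_zero.2 Fintype.card_ne_zero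
  have hu : ∑ _i : ι, (Fintype.card ι : ℝ)⁻¹ = 1 := by simp [hcard]
  have hexp : 𝔼 i, φ i = ∑ i, (Fintype.card ι : ℝ)⁻¹ * φ i := by
    rw [Fintype.expect_eq_sum_div_card, ← mul_sum, div_eq_inv_mul]
  rw [hexp, abs_sub_le_iff]
  constructor
  · exact sum_mul_sub_sum_mul_le (hp.trans hu.symm) hφ
  · simpa only [l1DistUniform, abs_sub_comm] using sum_mul_sub_sum_mul_le (hu.trans hp.symm) hφ

theorem sum_mul_add_le_sum_mul {p φ ψ : ι → ℝ} (hp₀ : ∀ i, 0 ≤ p i) (hp : ∑ i, p i = 1)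
    {c : ℝ} (h : ∀ i, φ i + c ≤ ψ i) : ∑ i, p i * φ i + c ≤ ∑ i, p i * ψ i := by
  calc ∑ i, p i * φ i + c = ∑ i, p i * (φ i + c) := by
        simp only [mul_add, sum_add_distrib, ← sum_mul, hp, one_mul]
    _ ≤ ∑ i, p i * ψ i := sum_le_sum fun i _ => mul_le_mul_of_nonneg_left (h i) (hp₀ i)

end Averages

section DualInequality

variable {G : Type*} [AddCommGroup G] [Fintype G] {p₁ p₂ p₃ : G → ℝ}

theorem sum_mul_le_of_le_translates (hp₁ : ∑ x, p₁ x = 1) (hp₂ : ∑ y, p₂ y = 1)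
    (hp₃ : ∑ d, p₃ d = 1)
    (hL1 : l1DistUniform p₁ + l1DistUniform p₂ + l1DistUniform p₃ ≤ 1)
    {f g k : G → ℝ} {M : ℝ} (hf : ∀ x, f x ∈ Set.Icc 0 M) (hg : ∀ y, g y ∈ Set.Icc 0 M)
    (hk : ∀ d, 0 ≤ k d) {a b d₀ : G} (hkf : ∀ d, k d ≤ f (d + b)) (hkg : ∀ d, k d ≤ g (a - d))
    (hM : ∀ x, M ≤ f x + g (x - d₀)) :
    ∑ d, p₃ d * k d ≤ ∑ x, p₁ x * f x + ∑ y, p₂ y * g y := by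
  have hM₀ : 0 ≤ M := (hf 0).1.trans (hf 0).2
  have hkf' : 𝔼 d, k d ≤ 𝔼 x, f x :=
    (expect_le_expect fun d _ => hkf d).trans_eq
      (Fintype.expect_equiv (Equiv.addRight b) _ _ fun _ => rfl)
  have hkg' : 𝔼 d, k d ≤ 𝔼 y, g y :=
    (expect_le_expect fun d _ => hkg d).trans_eq
      (Fintype.expect_equiv (Equiv.subLeft a) _ _ fun _ => rfl)
  have hM' : M ≤ 𝔼 x, f x + 𝔼 y, g y :=
    calc M ≤ 𝔼 x, (f x + g (x - d₀)) := le_expect univ_nonempty fun x _ => hM x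
      _ = 𝔼 x, f x + 𝔼 y, g y := by
        rw [expect_add_distrib]
        exact congrArg _ (Fintype.expect_equiv (Equiv.subRight d₀) _ _ fun _ => rfl)
  have e₁ := (abs_sub_le_iff.1 (abs_sum_mul_sub_expect_le hp₁ hf)).2
  have e₂ := (abs_sub_le_iff.1 (abs_sum_mul_sub_expect_le hp₂ hg)).2
  have e₃ := (abs_sub_le_iff.1 (abs_sum_mul_sub_expect_le hp₃
    fun d => ⟨hk d, (hkf d).trans (hf _).2⟩)).1
  nlinarith [mul_le_mul_of_nonneg_left hL1 hM₀]

theorem le_sum_mul_of_forall_le_add (hp₁ : (∀ x, 0 ≤ p₁ x) ∧ ∑ x, p₁ x = 1)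
    (hp₂ : (∀ y, 0 ≤ p₂ y) ∧ ∑ y, p₂ y = 1) (hp₃ : (∀ d, 0 ≤ p₃ d) ∧ ∑ d, p₃ d = 1)
    (hL1 : l1DistUniform p₁ + l1DistUniform p₂ + l1DistUniform p₃ ≤ 1)
    {f g h : G → ℝ} {c : ℝ} (hfgh : ∀ x y, c ≤ f x + g y + h (x - y)) :
    c ≤ ∑ x, p₁ x * f x + ∑ y, p₂ y * g y + ∑ d, p₃ d * h d := by
  obtain ⟨a, ha⟩ := Finite.exists_min f
  obtain ⟨b, hb⟩ := Finite.exists_min g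
  set k : G → ℝ := fun d => max (c - h d - f a - g b) 0
  obtain ⟨d₀, hd₀⟩ := Finite.exists_max k
  have hk_le (d x : G) : k d ≤ (f x - f a) + (g (x - d) - g b) := by
    have := hfgh x (x - d)
    rw [sub_sub_cancel] at this
    exact max_le (by linarith) (by linarith [ha x, hb (x - d)])
  have hcore := sum_mul_le_of_le_translates hp₁.2 hp₂.2 hp₃.2 hL1
    (f := fun x => min (f x - f a) (k d₀)) (g := fun y => min (g y - g b) (k d₀))
    (a := a) (b := b) (d₀ := d₀)
    (fun x => ⟨le_min (sub_nonneg.2 (ha x)) (le_max_right _ _), min_le_right _ _⟩)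
    (fun y => ⟨le_min (sub_nonneg.2 (hb y)) (le_max_right _ _), min_le_right _ _⟩)
    (fun d => le_max_right _ _)
    (fun d => le_min (by simpa only [add_sub_cancel_left, sub_self, add_zero] using hk_le d (d + b))
      (hd₀ d))
    (fun d => le_min (by simpa only [sub_self, zero_add] using hk_le d a) (hd₀ d))
    (fun x => by
      rcases min_cases (f x - f a) (k d₀) with h₁ | h₁ <;>
        rcases min_cases (g (x - d₀) - g b) (k d₀) with h₂ | h₂ <;>
        linarith [hk_le d₀ x, ha x, hb (x - d₀), le_max_right (c - h d₀ - f a - g b) 0])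
  have s₁ := sum_mul_add_le_sum_mul hp₁.1 hp₁.2
    (φ := fun x => min (f x - f a) (k d₀)) (ψ := f) (c := f a) fun x => by
      have := min_le_left (f x - f a) (k d₀); linarith
  have s₂ := sum_mul_add_le_sum_mul hp₂.1 hp₂.2
    (φ := fun y => min (g y - g b) (k d₀)) (ψ := g) (c := g b) fun y => by
      have := min_le_left (g y - g b) (k d₀); linarith
  have s₃ := sum_mul_add_le_sum_mul hp₃.1 hp₃.2
    (φ := fun d => -k d) (c := c - f a - g b) (ψ := h) fun d => by
      have := le_max_left (c - h d - f a - g b) 0; linarith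
  simp only [mul_neg, sum_neg_distrib] at s₃
  linarith

end DualInequality

section Duality

variable {G : Type*} [AddCommGroup G] [Fintype G]

def diffMarginals : (G × G → ℝ) →ₗ[ℝ] (G ⊕ G ⊕ G → ℝ) where
  toFun w := Sum.elim (fun x => ∑ y, w (x, y))
    (Sum.elim (fun y => ∑ x, w (x, y)) (fun d => ∑ x, w (x, x - d)))
  map_add' v w := by
    funext i
    rcases i with x | y | d <;> simp [sum_add_distrib]
  map_smul' r w := by
    funext i
    rcases i with x | y | d <;> simp [mul_sum]

theorem sum_diffMarginals_mul (w : G × G → ℝ) (c : G ⊕ G ⊕ G → ℝ) :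
    ∑ i, diffMarginals w i * c i =
      ∑ z : G × G, w z * (c (.inl z.1) + c (.inr (.inl z.2)) + c (.inr (.inr (z.1 - z.2)))) := by
  have h₂ : ∑ y, (∑ x, w (x, y)) * c (.inr (.inl y)) = ∑ x, ∑ y, w (x, y) * c (.inr (.inl y)) := by
    rw [sum_comm]
    simp only [sum_mul]
  have h₃ : ∑ d, (∑ x, w (x, x - d)) * c (.inr (.inr d)) =
      ∑ x, ∑ y, w (x, y) * c (.inr (.inr (x - y))) := by
    simp only [sum_mul]
    rw [sum_comm]
    exact sum_congr rfl fun x _ =>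
      Fintype.sum_equiv (Equiv.subLeft x) _ _ fun d => by simp [sub_sub_cancel]
  rw [Fintype.sum_sum_type, Fintype.sum_sum_type, Fintype.sum_prod_type]
  simp only [diffMarginals, LinearMap.coe_mk, AddHom.coe_mk, Sum.elim_inl, Sum.elim_inr, mul_add,
    sum_add_distrib]
  rw [h₂, h₃, ← add_assoc]
  simp only [sum_mul]

theorem exists_mem_stdSimplex_diffMarginals_eq {p₁ p₂ p₃ : G → ℝ}
    (hdual : ∀ (f g h : G → ℝ) (c : ℝ), (∀ x y, c ≤ f x + g y + h (x - y)) →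
      c ≤ ∑ x, p₁ x * f x + ∑ y, p₂ y * g y + ∑ d, p₃ d * h d) :
    ∃ w ∈ stdSimplex ℝ (G × G), diffMarginals w = Sum.elim p₁ (Sum.elim p₂ p₃) := by
  classical
  by_contra hP
  have hconv := (convex_stdSimplex ℝ (G × G)).linear_image diffMarginals
  have hclosed : IsClosed (diffMarginals '' stdSimplex ℝ (G × G)) :=
    ((isCompact_stdSimplex ℝ (G × G)).image diffMarginals.continuous_of_finiteDimensional).isClosed
  obtain ⟨ℓ, u, hℓP, hℓ⟩ := geometric_hahn_banach_point_closed hconv hclosed hP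
  set c : G ⊕ G ⊕ G → ℝ := fun i => ℓ fun j => if i = j then 1 else 0
  have hℓ_apply (v : G ⊕ G ⊕ G → ℝ) : ℓ v = ∑ i, v i * c i :=
    LinearMap.pi_apply_eq_sum_univ ℓ.toLinearMap v
  have := hdual (c ∘ .inl) (c ∘ .inr ∘ .inl) (c ∘ .inr ∘ .inr) u fun x y => by
    have := hℓ _ ⟨_, single_mem_stdSimplex ℝ (x, y), rfl⟩
    rw [hℓ_apply, sum_diffMarginals_mul] at this
    simpa [Pi.single_apply] using this.le
  rw [hℓ_apply] at hℓP
  simp only [Fintype.sum_sum_type, Sum.elim_inl, Sum.elim_inr] at hℓP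
  simp only [Function.comp_apply] at this
  linarith

end Duality

theorem statement15_general {H : Type*} [AddCommGroup H] [Fintype H]
    (p₁ p₂ p₃ : H → ℝ)
    (h₁ : (∀ x, 0 ≤ p₁ x) ∧ ∑ x, p₁ x = 1)
    (h₂ : (∀ x, 0 ≤ p₂ x) ∧ ∑ x, p₂ x = 1)
    (h₃ : (∀ x, 0 ≤ p₃ x) ∧ ∑ x, p₃ x = 1)
    (hL1 : (∑ x, |p₁ x - ((Fintype.card H : ℝ))⁻¹|) +
           (∑ x, |p₂ x - ((Fintype.card H : ℝ))⁻¹|) +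
           (∑ x, |p₃ x - ((Fintype.card H : ℝ))⁻¹|) ≤ 1) :
    ∃ w : H × H → ℝ, (∀ z, 0 ≤ w z) ∧ (∑ z, w z = 1) ∧
      (∀ x, ∑ y, w (x, y) = p₁ x) ∧
      (∀ y, ∑ x, w (x, y) = p₂ y) ∧
      (∀ d, ∑ x, w (x, x - d) = p₃ d) := by
  obtain ⟨w, ⟨hw₀, hw₁⟩, hw⟩ := exists_mem_stdSimplex_diffMarginals_eq
    fun f g h c hfgh => le_sum_mul_of_forall_le_add h₁ h₂ h₃ hL1 hfgh
  exact ⟨w, hw₀, hw₁, fun x => congrFun hw (.inl x), fun y => congrFun hw (.inr (.inl y)),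
    fun d => congrFun hw (.inr (.inr d))⟩

/-- Let `H` be a finite abelian group and let `p₁, p₂, p₃` be probability
distributions on `H` with `‖p₁ - u_H‖₁ + ‖p₂ - u_H‖₁ + ‖p₃ - u_H‖₁ ≤ 1`. Then there is a
coupling `(X, Y)` with `X ~ p₁`, `Y ~ p₂` and `X - Y ~ p₃`. -/
theorem statement15 {H : Type*} [AddCommGroup H] [Fintype H] [DecidableEq H]
    (p₁ p₂ p₃ : H → ℝ)
    (h₁ : (∀ x, 0 ≤ p₁ x) ∧ ∑ x, p₁ x = 1)
    (h₂ : (∀ x, 0 ≤ p₂ x) ∧ ∑ x, p₂ x = 1)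
    (h₃ : (∀ x, 0 ≤ p₃ x) ∧ ∑ x, p₃ x = 1)
    (hL1 : (∑ x, |p₁ x - ((Fintype.card H : ℝ))⁻¹|) +
           (∑ x, |p₂ x - ((Fintype.card H : ℝ))⁻¹|) +
           (∑ x, |p₃ x - ((Fintype.card H : ℝ))⁻¹|) ≤ 1) :
    ∃ w : H × H → ℝ, (∀ z, 0 ≤ w z) ∧ (∑ z, w z = 1) ∧
      (∀ x, ∑ y, w (x, y) = p₁ x) ∧
      (∀ y, ∑ x, w (x, y) = p₂ y) ∧
      (∀ d, ∑ x, w (x, x - d) = p₃ d) :=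
  statement15_general p₁ p₂ p₃ h₁ h₂ h₃ hL1
end
end
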